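/- arXiv:2209.02487 — 4 statements merged into one kernel-verified Lean document; each statement's English description precedes it below -/
import Mathlib

section
/- Let G be a finite group, α : G × G → ℂˣ a 2-cocycle, and N ⊴ G a normal subgroup; regard the twisted group algebra ℂ^αN as a subalgebra of ℂ^αG. Let M and M' be simple finite-dimensional left ℂ^αN-modules, and suppose ι_M (respectively ι_{M'}) is a central idempotent of ℂ^αN which acts as the identity on M (resp. M') and acts as zero on every simple ℂ^αN-module not isomorphic to M (resp. M'). Then ι_{M'} · ℂ^αG · ι_M ≠ 0 if and only if there exists g ∈ G with M' ≅ {}^{g}M as ℂ^αN-modules, where {}^{g}M is the module with the same underlying vector space as M and action a ⋆ m = (u_g⁻¹ a u_g)·m for a ∈ ℂ^αN. -/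
/-- A 2-cocycle on `G` with values in `ℂˣ`. -/
def IsTwoCocycle {G : Type} [Group G] (α : G → G → ℂˣ) : Prop :=
  ∀ g h k : G, α g h * α (g * h) k = α h k * α g (h * k)

/-- A twisted group algebra `ℂ^αG`: a ℂ-algebra with a basis `u_g` of invertible
elements satisfying `u_g * u_h = α g h • u_{gh}`. -/
structure TwistedGroupAlgebra (G : Type) [Group G] (α : G → G → ℂˣ) where
  carrier : Type
  [ringStr : Ring carrier]
  [algStr : Algebra ℂ carrier]
  u : G → carrierˣ
  basis : Module.Basis G ℂ carrier
  basis_eq : ∀ g : G, basis g = (u g : carrier)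
  u_mul : ∀ g h : G, (u g : carrier) * (u h : carrier) = (α g h : ℂ) • (u (g * h) : carrier)

attribute [instance] TwistedGroupAlgebra.ringStr TwistedGroupAlgebra.algStr

namespace TwistedGroupAlgebra

variable {G : Type} [Group G] {α : G → G → ℂˣ}

/-- The subalgebra `ℂ^αN ⊆ ℂ^αG` spanned by the `u_n`, `n ∈ N`. -/
def sub (A : TwistedGroupAlgebra G α) (N : Subgroup G) : Subalgebra ℂ A.carrier :=
  Algebra.adjoin ℂ ((fun g : G => (A.u g : A.carrier)) '' (N : Set G))

/-- The dimension over `ℂ` of a `ℂ^αN`-module. -/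
noncomputable def dimC (A : TwistedGroupAlgebra G α) (N : Subgroup G) (M : Type)
    [AddCommGroup M] [Module (A.sub N) M] : ℕ :=
  Module.finrank ℂ (RestrictScalars ℂ (A.sub N) M)

/-- `TwistIso A N g M M'` says that `M'` is isomorphic to the twist `{}^{g}M` of the
`ℂ^αN`-module `M`, i.e. there is an additive bijection `e : M' → M` with
`e (a • m') = (u_g⁻¹ a u_g) • e m'` for all `a ∈ ℂ^αN`. -/
def TwistIso (A : TwistedGroupAlgebra G α) (N : Subgroup G) (g : G)
    (M M' : Type) [AddCommGroup M] [Module (A.sub N) M]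
    [AddCommGroup M'] [Module (A.sub N) M'] : Prop :=
  ∃ e : M' ≃+ M, ∀ (a : A.sub N) (m' : M')
    (h : (((A.u g)⁻¹ : A.carrierˣ) : A.carrier) * (a : A.carrier) * (A.u g : A.carrier) ∈
      A.sub N),
    e (a • m') =
      (⟨(((A.u g)⁻¹ : A.carrierˣ) : A.carrier) * (a : A.carrier) * (A.u g : A.carrier), h⟩ :
        A.sub N) • e m'

/-- The action of `G/N` on isomorphism classes of simple `ℂ^αN`-modules is transitive. -/
def TransAction (A : TwistedGroupAlgebra G α) (N : Subgroup G) : Prop :=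
  ∀ (M : Type) [AddCommGroup M] [Module (A.sub N) M]
    (M' : Type) [AddCommGroup M'] [Module (A.sub N) M'],
    IsSimpleModule (A.sub N) M → IsSimpleModule (A.sub N) M' →
    ∃ g : G, TwistIso A N g M M'

/-- The action of `G/N` on isomorphism classes of simple `ℂ^αN`-modules is free. -/
def FreeAction (A : TwistedGroupAlgebra G α) (N : Subgroup G) : Prop :=
  ∀ (M : Type) [AddCommGroup M] [Module (A.sub N) M], IsSimpleModule (A.sub N) M →
    ∀ g : G, TwistIso A N g M M → g ∈ N

/-- The restriction of the cohomology class of `α` to the subgroup `N` is trivial. -/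
def RestTrivial (α : G → G → ℂˣ) (N : Subgroup G) : Prop :=
  ∃ β : N → ℂˣ, ∀ n n' : N, α n n' = β n * β n' * (β (n * n'))⁻¹

end TwistedGroupAlgebra

/-! As `x ↦ ιM' x ιM` is linear and the `u_g` form a basis, `ιM' ℂ^αG ιM ≠ 0` iff
`ιM' u_g ιM ≠ 0` for some `g`, i.e. iff `c ιM ≠ 0` for `c = u_g⁻¹ ιM' u_g`. Since `N` is normal,
conjugation by `u_g` is an automorphism of `ℂ^αN`, and `c` acts on `M` as `ιM'` acts on `{}^{g}M`.
If `{}^{g}M ≅ M'`, both `c` and `ιM` act on `M` as the identity, so `c ιM ≠ 0`. Conversely the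
nonzero idempotent `c ιM` acts nontrivially on some simple module `W`; then so does `ιM`, forcing
`W ≅ M`, and `ιM'` acts nontrivially on `{}^{g}M`, forcing `{}^{g}M ≅ M'`. -/

universe u

theorem IsIdempotentElem.exists_isSimpleModule_smul_ne_zero {R : Type u} [Ring R] {e : R}
    (he : IsIdempotentElem e) (h0 : e ≠ 0) :
    ∃ (W : Type u) (_ : AddCommGroup W) (_ : Module R W), IsSimpleModule R W ∧
      ∃ w : W, e • w ≠ 0 := by
  -- `1 - e` lies in the left annihilator of `e`, a proper left ideal; so does any maximal
  -- left ideal containing it, and `e` acts nontrivially on the quotient by it.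
  have hker : LinearMap.ker (LinearMap.toSpanSingleton R R e) ≠ ⊤ := by
    rw [Ne, LinearMap.ker_eq_top]
    exact fun h => h0 (by simpa using LinearMap.congr_fun h 1)
  obtain ⟨I, hI, hle⟩ := Ideal.exists_le_maximal _ hker
  refine ⟨R ⧸ I, inferInstance, inferInstance,
    isSimpleModule_iff_isCoatom.mpr (Ideal.isMaximal_def.mp hI), Submodule.Quotient.mk 1, ?_⟩
  rw [← Submodule.Quotient.mk_smul, smul_eq_mul, mul_one, Ne, Submodule.Quotient.mk_eq_zero]
  intro heI
  have h1e : 1 - e ∈ I := hle (by simp [sub_mul, he.eq])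
  exact hI.ne_top ((Ideal.eq_top_iff_one I).mpr (by simpa using add_mem h1e heI))

/-- `M` with `R` acting through `σ`; for `σ` the conjugation `a ↦ u_g⁻¹ a u_g` this is `{}^{g}M`. -/
def Twist {R S : Type*} [Ring R] [Ring S] (_σ : R →+* S) (M : Type*) : Type _ := M

namespace Twist

variable {R S : Type u} [Ring R] [Ring S] (σ : R →+* S) (M : Type u) [AddCommGroup M] [Module S M]

instance : AddCommGroup (Twist σ M) := ‹AddCommGroup M›

instance : Module R (Twist σ M) := Module.compHom M σ

theorem isSimpleModule (hσ : Function.Surjective σ) [IsSimpleModule S M] :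
    IsSimpleModule R (Twist σ M) :=
  have : RingHomSurjective σ := ⟨hσ⟩
  (LinearMap.isSimpleModule_iff_of_bijective (M := Twist σ M) (N := M)
    { toFun := id, map_add' := fun _ _ => rfl, map_smul' := fun _ _ => rfl }
    Function.bijective_id).mpr ‹_›

variable {σ M} {M' : Type u} [AddCommGroup M'] [Module R M'] {ι : S} {ι' : R}

theorem mul_ne_zero_of_linearEquiv (f : Twist σ M ≃ₗ[R] M') [Nontrivial M]
    (hact : ∀ x : M, ι • x = x) (hact' : ∀ x : M', ι' • x = x) : σ ι' * ι ≠ 0 := by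
  intro h0
  obtain ⟨m, hm⟩ := exists_ne (0 : M)
  have hfix : f ((σ ι' * ι) • m) = f m := by
    rw [mul_smul, hact]
    exact (f.map_smul ι' m).trans (hact' _)
  rw [h0, zero_smul] at hfix
  exact hm (f.injective hfix).symm

theorem nonempty_linearEquiv_of_mul_ne_zero (hσ : Function.Surjective σ) [IsSimpleModule S M]
    (hzero : ∀ (W : Type u) [AddCommGroup W] [Module S W],
      IsSimpleModule S W → IsEmpty (W ≃ₗ[S] M) → ∀ w : W, ι • w = 0)
    (hzero' : ∀ (W : Type u) [AddCommGroup W] [Module R W],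
      IsSimpleModule R W → IsEmpty (W ≃ₗ[R] M') → ∀ w : W, ι' • w = 0)
    (hidem : IsIdempotentElem (σ ι' * ι)) (hne : σ ι' * ι ≠ 0) :
    Nonempty (Twist σ M ≃ₗ[R] M') := by
  obtain ⟨W, _, _, hW, w, hw⟩ := hidem.exists_isSimpleModule_smul_ne_zero hne
  rw [mul_smul] at hw
  obtain ⟨f⟩ := not_isEmpty_iff.mp fun hE => hw (by rw [hzero W hW hE w, smul_zero])
  refine not_isEmpty_iff.mp fun hE => hw (f.injective ?_)
  rw [f.map_smul, map_zero]
  exact hzero' _ (isSimpleModule σ M hσ) hE (f (ι • w))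

end Twist

theorem Algebra.inv_mul_mul_mem_adjoin {R A : Type*} [CommSemiring R] [Semiring A] [Algebra R A]
    {s : Set A} (v : Aˣ) (hs : ∀ x ∈ s, ↑v⁻¹ * x * ↑v ∈ Algebra.adjoin R s) {x : A}
    (hx : x ∈ Algebra.adjoin R s) : ↑v⁻¹ * x * ↑v ∈ Algebra.adjoin R s := by
  induction hx using Algebra.adjoin_induction with
  | mem y hy => exact hs y hy
  | algebraMap r => simp [Algebra.commutes, mul_assoc]
  | add y z _ _ hy hz => simpa [mul_add, add_mul] using add_mem hy hz
  | mul y z _ _ hy hz => simpa [mul_assoc] using mul_mem hy hz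

namespace TwistedGroupAlgebra

variable {G : Type} [Group G] {α : G → G → ℂˣ} (A : TwistedGroupAlgebra G α)

theorem u_mul_u_eq_smul {a b c d : G} (h : a * b = c * d) :
    (A.u a * A.u b : A.carrier) = ((α a b / α c d : ℂˣ) : ℂ) • (A.u c * A.u d : A.carrier) := by
  rw [A.u_mul, A.u_mul, smul_smul, ← Units.val_mul, div_mul_cancel, h]

theorem exists_mul_u_mul_ne_zero {a b : A.carrier} (h : ∃ x, a * x * b ≠ 0) :
    ∃ g, a * A.u g * b ≠ 0 := by
  contrapose! h
  have : LinearMap.mulLeftRight ℂ (a, b) = 0 :=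
    A.basis.ext fun g => by simpa [A.basis_eq] using h g
  exact fun x => by simpa using LinearMap.congr_fun this x

theorem u_mem_sub {N : Subgroup G} {n : G} (hn : n ∈ N) : (A.u n : A.carrier) ∈ A.sub N :=
  Algebra.subset_adjoin ⟨n, hn, rfl⟩

variable (N : Subgroup G) [hN : N.Normal]

theorem u_inv_mul_mul_u_mem_sub (g : G) {x : A.carrier} (hx : x ∈ A.sub N) :
    ↑(A.u g)⁻¹ * x * A.u g ∈ A.sub N := by
  refine Algebra.inv_mul_mul_mem_adjoin (A.u g) (Set.forall_mem_image.mpr fun n hn => ?_) hx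
  have hconj : n * g = g * (g⁻¹ * n * g) := by group
  rw [mul_assoc, A.u_mul_u_eq_smul hconj, mul_smul_comm, Units.inv_mul_cancel_left]
  exact Subalgebra.smul_mem _ (A.u_mem_sub (by simpa using hN.conj_mem n hn g⁻¹)) _

theorem u_mul_mul_u_inv_mem_sub (g : G) {x : A.carrier} (hx : x ∈ A.sub N) :
    A.u g * x * ↑(A.u g)⁻¹ ∈ A.sub N := by
  refine inv_inv (A.u g) ▸ Algebra.inv_mul_mul_mem_adjoin (A.u g)⁻¹
    (Set.forall_mem_image.mpr fun n hn => ?_) hx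
  have hconj : g * n = (g * n * g⁻¹) * g := by group
  rw [inv_inv, A.u_mul_u_eq_smul hconj, smul_mul_assoc, Units.mul_inv_cancel_right]
  exact Subalgebra.smul_mem _ (A.u_mem_sub (hN.conj_mem n hn g)) _

noncomputable def conj (g : G) : A.sub N ≃+* A.sub N where
  toFun a := ⟨↑(A.u g)⁻¹ * a * A.u g, A.u_inv_mul_mul_u_mem_sub N g a.2⟩
  invFun a := ⟨A.u g * a * ↑(A.u g)⁻¹, A.u_mul_mul_u_inv_mem_sub N g a.2⟩
  left_inv a := by ext; simp [mul_assoc]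
  right_inv a := by ext; simp [mul_assoc]
  map_mul' a b := by ext; simp [mul_assoc]
  map_add' a b := by ext; simp [mul_add, add_mul]

theorem conj_mul_eq_zero_iff (g : G) (a b : A.sub N) :
    A.conj N g a * b = 0 ↔ (a : A.carrier) * A.u g * b = 0 := by
  rw [← ZeroMemClass.coe_eq_zero, Subalgebra.coe_mul]
  change ↑(A.u g)⁻¹ * (a : A.carrier) * A.u g * b = 0 ↔ _
  rw [mul_assoc, mul_assoc, Units.mul_right_eq_zero, mul_assoc]

theorem twistIso_iff (g : G) (M M' : Type) [AddCommGroup M] [Module (A.sub N) M]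
    [AddCommGroup M'] [Module (A.sub N) M'] :
    TwistIso A N g M M' ↔
      Nonempty (Twist (A.conj N g : A.sub N →+* A.sub N) M ≃ₗ[A.sub N] M') := by
  constructor
  · rintro ⟨e, he⟩
    exact ⟨.symm { e with map_smul' := fun a m => he a m (A.u_inv_mul_mul_u_mem_sub N g a.2) }⟩
  · rintro ⟨f⟩
    exact ⟨f.symm.toAddEquiv, fun a m _ => f.symm.map_smul a m⟩

end TwistedGroupAlgebra

open TwistedGroupAlgebra in
theorem stmt2_general {G : Type} [Group G] (α : G → G → ℂˣ)
    (A : TwistedGroupAlgebra G α) (N : Subgroup G) [N.Normal]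
    (M M' : Type) [AddCommGroup M] [Module (A.sub N) M] [AddCommGroup M'] [Module (A.sub N) M']
    (hM : IsSimpleModule (A.sub N) M)
    (ιM ιM' : A.sub N)
    (hcen : ∀ b : A.sub N, ιM * b = b * ιM)
    (hidem : ιM * ιM = ιM) (hidem' : ιM' * ιM' = ιM')
    (hact : ∀ x : M, ιM • x = x) (hact' : ∀ x : M', ιM' • x = x)
    (hzero : ∀ (W : Type) [AddCommGroup W] [Module (A.sub N) W],
      IsSimpleModule (A.sub N) W → IsEmpty (W ≃ₗ[(A.sub N)] M) → ∀ w : W, ιM • w = 0)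
    (hzero' : ∀ (W : Type) [AddCommGroup W] [Module (A.sub N) W],
      IsSimpleModule (A.sub N) W → IsEmpty (W ≃ₗ[(A.sub N)] M') → ∀ w : W, ιM' • w = 0) :
    (∃ x : A.carrier, (ιM' : A.carrier) * x * (ιM : A.carrier) ≠ 0) ↔
      ∃ g : G, TwistIso A N g M M' := by
  simp_rw [A.twistIso_iff]
  constructor
  · intro hx
    obtain ⟨g, hg⟩ := A.exists_mul_u_mul_ne_zero hx
    have hidem_conj : IsIdempotentElem (A.conj N g ιM' * ιM) :=
      (IsIdempotentElem.map hidem' (A.conj N g)).mul_of_commute (hcen _).symm hidem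
    exact ⟨g, Twist.nonempty_linearEquiv_of_mul_ne_zero (A.conj N g).surjective hzero hzero'
      hidem_conj (mt (A.conj_mul_eq_zero_iff N g ιM' ιM).mp hg)⟩
  · rintro ⟨g, ⟨f⟩⟩
    have := IsSimpleModule.nontrivial (A.sub N) M
    exact ⟨A.u g, mt (A.conj_mul_eq_zero_iff N g ιM' ιM).mpr
      (Twist.mul_ne_zero_of_linearEquiv f hact hact')⟩

open TwistedGroupAlgebra in
/-- Let `α` be a 2-cocycle on a finite group `G`, `N ⊴ G`, and let
`M, M'` be simple finite-dimensional `ℂ^αN`-modules with corresponding central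
idempotents `ιM, ιM' ∈ ℂ^αN` (acting as the identity on `M` resp. `M'`, and as zero on
every simple module not isomorphic to it).  Then `ιM' · ℂ^αG · ιM ≠ 0` iff there is
`g ∈ G` with `M' ≅ {}^{g}M`. -/
theorem stmt2 {G : Type} [Group G] [Fintype G] (α : G → G → ℂˣ) (hα : IsTwoCocycle α)
    (A : TwistedGroupAlgebra G α) (N : Subgroup G) [N.Normal]
    (M M' : Type) [AddCommGroup M] [Module (A.sub N) M] [AddCommGroup M'] [Module (A.sub N) M']
    [Module ℂ M] [IsScalarTower ℂ (A.sub N) M] [FiniteDimensional ℂ M]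
    [Module ℂ M'] [IsScalarTower ℂ (A.sub N) M'] [FiniteDimensional ℂ M']
    (hM : IsSimpleModule (A.sub N) M) (hM' : IsSimpleModule (A.sub N) M')
    (ιM ιM' : A.sub N)
    (hcen : ∀ b : A.sub N, ιM * b = b * ιM) (hcen' : ∀ b : A.sub N, ιM' * b = b * ιM')
    (hidem : ιM * ιM = ιM) (hidem' : ιM' * ιM' = ιM')
    (hact : ∀ x : M, ιM • x = x) (hact' : ∀ x : M', ιM' • x = x)
    (hzero : ∀ (W : Type) [AddCommGroup W] [Module (A.sub N) W],
      IsSimpleModule (A.sub N) W → IsEmpty (W ≃ₗ[(A.sub N)] M) → ∀ w : W, ιM • w = 0)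
    (hzero' : ∀ (W : Type) [AddCommGroup W] [Module (A.sub N) W],
      IsSimpleModule (A.sub N) W → IsEmpty (W ≃ₗ[(A.sub N)] M') → ∀ w : W, ιM' • w = 0) :
    (∃ x : A.carrier, (ιM' : A.carrier) * x * (ιM : A.carrier) ≠ 0) ↔
      ∃ g : G, TwistIso A N g M M' :=
  stmt2_general α A N M M' hM ιM ιM' hcen hidem hidem' hact hact' hzero hzero'
end

section
/- Let G be a finite group, α : G × G → ℂˣ a 2-cocycle such that the twisted group algebra ℂ^αG is a simple ring, and let N ⊴ G be a normal subgroup; write H := G/N. Grade ℂ^αG by H, the homogeneous component of a coset c ∈ H being A_c := span_ℂ{ u_g : g ∈ c }. Let End_ℂ(ℂ[H]) be the endomorphism algebra of the vector space with basis { e_h }_{h ∈ H}, graded by H with homogeneous component of degree h equal to span_ℂ{ E_{h·h'', h''} : h'' ∈ H }, where E_{h₁,h₂} is the endomorphism sending e_{h₂} to e_{h₁} and all other basis vectors to 0 (the elementary crossed product H-grading). Then there exists a ℂ-algebra isomorphism ψ : ℂ^αG → End_ℂ(ℂ[H]) satisfying ψ(A_c) = (End_ℂ(ℂ[H]))_c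 for every c ∈ H if and only if N is a Lagrangian with respect to the class of α, i.e. the restriction of the class of α to N is trivial and |N|² = |G|. -/
/-- The elementary matrix unit `E_{h₁,h₂}` of `End_ℂ(ℂ[H])`, sending the basis vector
`e_{h₂}` to `e_{h₁}` and all other basis vectors to `0`. -/
noncomputable def Eunit (H : Type) [DecidableEq H] (h₁ h₂ : H) :
    Module.End ℂ (H → ℂ) :=
  (LinearMap.single ℂ (fun _ : H => ℂ) h₁).comp (LinearMap.proj h₂)

/-- The degree-`h` homogeneous component `span_ℂ{E_{h·h'',h''} : h'' ∈ H}` of the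
elementary crossed product `H`-grading of `End_ℂ(ℂ[H])`. -/
noncomputable def elemComp (H : Type) [Group H] [DecidableEq H] (h : H) :
    Submodule ℂ (Module.End ℂ (H → ℂ)) :=
  Submodule.span ℂ {T | ∃ h'' : H, T = Eunit H (h * h'') h''}

namespace TwistedGroupAlgebra

/-- The homogeneous component `A_c = span_ℂ{u_g : g ∈ c}` of the quotient
`G/N`-grading of `ℂ^αG`, for a coset `c ∈ G/N`. -/
def quotComp {G : Type} [Group G] {α : G → G → ℂˣ} (A : TwistedGroupAlgebra G α)
    (N : Subgroup G) (c : G ⧸ N) : Submodule ℂ A.carrier :=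
  Submodule.span ℂ {x | ∃ g : G, (g : G ⧸ N) = c ∧ x = (A.u g : A.carrier)}

end TwistedGroupAlgebra

/-!
If `ψ` is a graded isomorphism, it maps `ℂ^αN = A_1` onto the diagonal endomorphisms, so
`|N| = |G/N|`, and `e_1` is a common eigenvector of the `ψ(u_n)`; its eigenvalues form a `β`
with `α|_N = ∂β`. Conversely, if `α|_N = ∂β`, then `ℂ^αG` acts on the module
`ℂ^αG ⊗_{ℂ^αN} ℂ_β ≅ ℂ[G/N]` induced from the character `β`, and `u_g` sends the line of `e_h`
to that of `e_{gh}`, so the action is graded. It is injective because `ℂ^αG` is simple, hence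
bijective when `|N|² = |G|`, and then each component maps onto the one of the same degree for
dimension reasons.
-/

theorem Subgroup.card_sq_eq_card_iff {G : Type} [Group G] [Finite G] (N : Subgroup G) :
    Nat.card N ^ 2 = Nat.card G ↔ Nat.card N = Nat.card (G ⧸ N) := by
  rw [sq, N.card_eq_card_quotient_mul_card_subgroup, Nat.mul_left_inj Nat.card_pos.ne', eq_comm]

theorem IsTwoCocycle.map_one_snd {G : Type} [Group G] {α : G → G → ℂˣ} (hα : IsTwoCocycle α)
    (g : G) : α g 1 = α 1 1 := by
  have h := hα g 1 1
  rw [mul_one, one_mul] at h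
  exact mul_right_cancel h

namespace TwistedGroupAlgebra

variable {G : Type} [Group G] {α : G → G → ℂˣ}

instance (A : TwistedGroupAlgebra G α) : Nontrivial A.carrier :=
  nontrivial_of_ne (A.basis 1) 0 (A.basis.ne_zero 1)

theorem isTwoCocycle (A : TwistedGroupAlgebra G α) : IsTwoCocycle α := by
  intro g h k
  apply Units.ext
  apply smul_left_injective ℂ (A.u (g * h * k)).ne_zero
  calc ((α g h * α (g * h) k : ℂˣ) : ℂ) • (A.u (g * h * k) : A.carrier)
      = (A.u g * A.u h : A.carrier) * A.u k := by
        rw [A.u_mul, smul_mul_assoc, A.u_mul, smul_smul, Units.val_mul]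
    _ = A.u g * (A.u h * A.u k : A.carrier) := mul_assoc _ _ _
    _ = ((α h k * α g (h * k) : ℂˣ) : ℂ) • (A.u (g * h * k) : A.carrier) := by
        rw [A.u_mul h k, mul_smul_comm, A.u_mul, smul_smul, Units.val_mul, mul_assoc]

lemma u_mem_quotComp (A : TwistedGroupAlgebra G α) (N : Subgroup G) (g : G) :
    (A.u g : A.carrier) ∈ A.quotComp N g :=
  Submodule.subset_span ⟨g, rfl, rfl⟩

lemma finrank_quotComp [Finite G] (A : TwistedGroupAlgebra G α) (N : Subgroup G) (c : G ⧸ N) :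
    Module.finrank ℂ (A.quotComp N c) = Nat.card N := by
  classical
  have := Fintype.ofFinite G
  have hspan : A.quotComp N c =
      Submodule.span ℂ (Set.range fun g : QuotientGroup.mk ⁻¹' {c} => A.basis g) := by
    simp only [quotComp, A.basis_eq]
    congr 1
    ext x
    simp [eq_comm]
  rw [hspan, finrank_span_eq_card (b := fun g : QuotientGroup.mk ⁻¹' {c} => A.basis g)
    (A.basis.linearIndependent.comp _ Subtype.val_injective), ← Nat.card_eq_fintype_card,
    QuotientGroup.card_preimage_mk]
  simp

theorem restTrivial_of_common_eigenvector (A : TwistedGroupAlgebra G α) (N : Subgroup G)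
    {V : Type} [AddCommGroup V] [Module ℂ V] (φ : A.carrier →ₐ[ℂ] Module.End ℂ V) {v : V}
    (hv : v ≠ 0) (hφ : ∀ n ∈ N, ∃ s : ℂ, φ (A.u n) v = s • v) : RestTrivial α N := by
  choose χ hχ using fun n : N => hφ n n.2
  have hχ_ne : ∀ n, χ n ≠ 0 := by
    intro n h0
    have hinj : Function.Injective (φ (A.u n)) :=
      (Module.End.isUnit_iff _).mp ((A.u n).isUnit.map φ) |>.injective
    exact hv (hinj (by rw [hχ, h0, zero_smul, map_zero]))
  have hχ_mul : ∀ n n' : N, χ n * χ n' = α n n' * χ (n * n') := by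
    intro n n'
    apply smul_left_injective ℂ hv
    calc (χ n * χ n') • v = φ (A.u n * A.u n' : A.carrier) v := by
          rw [map_mul, Module.End.mul_apply, hχ, map_smul, hχ, smul_smul, mul_comm]
      _ = (α n n' * χ (n * n') : ℂ) • v := by
          rw [A.u_mul, map_smul, LinearMap.smul_apply, ← Subgroup.coe_mul, hχ, smul_smul]
  refine ⟨fun n => Units.mk0 (χ n) (hχ_ne n), fun n n' => Units.ext ?_⟩
  simp only [Units.val_mul, Units.val_inv_eq_inv_val, Units.val_mk0, hχ_mul]
  field_simp [hχ_ne (n * n')]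

end TwistedGroupAlgebra

section ElementaryGrading

@[simp]
lemma eunit_apply {H : Type} [DecidableEq H] (h₁ h₂ : H) (f : H → ℂ) :
    Eunit H h₁ h₂ f = Pi.single h₁ (f h₂) := rfl

variable {H : Type} [Group H] [DecidableEq H]

lemma linearIndependent_eunit [Finite H] (c : H) :
    LinearIndependent ℂ fun h => Eunit H (c * h) h := by
  have := Fintype.ofFinite H
  rw [Fintype.linearIndependent_iff]
  intro a ha h
  simpa [Pi.single_apply] using congrFun (LinearMap.congr_fun ha (Pi.single h 1)) (c * h)

lemma finrank_elemComp [Finite H] (c : H) :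
    Module.finrank ℂ (elemComp H c) = Nat.card H := by
  have := Fintype.ofFinite H
  have hspan : elemComp H c = Submodule.span ℂ (Set.range fun h => Eunit H (c * h) h) := by
    simp only [elemComp, Set.range, eq_comm]
  rw [hspan, finrank_span_eq_card (linearIndependent_eunit c), Nat.card_eq_fintype_card]

lemma mem_elemComp_iff [Finite H] {c : H} {T : Module.End ℂ (H → ℂ)} :
    T ∈ elemComp H c ↔ ∀ h, ∃ s : ℂ, T (Pi.single h 1) = s • Pi.single (c * h) 1 := by
  have := Fintype.ofFinite H
  constructor
  · intro hT h
    induction hT using Submodule.span_induction with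
    | mem T hT =>
      obtain ⟨h', rfl⟩ := hT
      by_cases hh : h' = h
      · exact ⟨1, by simp [hh]⟩
      · exact ⟨0, by simp [Ne.symm hh]⟩
    | zero => exact ⟨0, by simp⟩
    | add S T _ _ hS hT =>
      obtain ⟨s, hs⟩ := hS
      obtain ⟨t, ht⟩ := hT
      exact ⟨s + t, by simp [hs, ht, add_smul]⟩
    | smul r T _ hT =>
      obtain ⟨t, ht⟩ := hT
      exact ⟨r * t, by simp [ht, smul_smul]⟩
  · intro hT
    choose s hs using hT
    have hsum : T = ∑ h, s h • Eunit H (c * h) h := by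
      refine (Pi.basisFun ℂ H).ext fun h => ?_
      ext x
      rw [LinearMap.sum_apply, Finset.sum_eq_single h (fun h' _ hh' => by simp [hh']) (by simp)]
      simp [hs]
    rw [hsum]
    exact Submodule.sum_mem _ fun h _ => Submodule.smul_mem _ _ (Submodule.subset_span ⟨h, rfl⟩)

end ElementaryGrading

namespace TwistedGroupAlgebra

variable {G : Type} [Group G] {α : G → G → ℂˣ}

/-- The factor `n ∈ N` in `g = σ(gN) * n`, where `σ = Quotient.out` picks coset representatives. -/
noncomputable def outInvMul (N : Subgroup G) (g : G) : N :=
  ⟨(g : G ⧸ N).out⁻¹ * g, QuotientGroup.eq.mp (QuotientGroup.out_eq' _)⟩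

lemma out_mul_outInvMul (N : Subgroup G) (g : G) : (g : G ⧸ N).out * outInvMul N g = g :=
  mul_inv_cancel_left _ _

variable (A : TwistedGroupAlgebra G α) (N : Subgroup G) [DecidableEq (G ⧸ N)] (β : N → ℂˣ)

/-- The projection of `ℂ^αG` onto the module `ℂ^αG ⊗_{ℂ^αN} ℂ_β` induced from the character
`β` of `ℂ^αN`, identified with `ℂ[G/N]` through the basis `u_{σ h} ⊗ 1`. -/
noncomputable def inducedProj : A.carrier →ₗ[ℂ] (G ⧸ N → ℂ) :=
  A.basis.constr ℂ fun g =>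
    (((α (g : G ⧸ N).out (outInvMul N g))⁻¹ * β (outInvMul N g) : ℂˣ) : ℂ) •
      Pi.single (g : G ⧸ N) 1

lemma inducedProj_u (g : G) :
    inducedProj A N β (A.u g) =
      (((α (g : G ⧸ N).out (outInvMul N g))⁻¹ * β (outInvMul N g) : ℂˣ) : ℂ) •
        Pi.single (g : G ⧸ N) 1 := by
  rw [← A.basis_eq, inducedProj, Module.Basis.constr_basis]

variable {β}

lemma inducedProj_u_out (hβ : ∀ n n' : N, α n n' = β n * β n' * (β (n * n'))⁻¹) (h : G ⧸ N) :
    inducedProj A N β (A.u h.out) = Pi.single h 1 := by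
  have hN : outInvMul N h.out = 1 := by
    ext
    simp [outInvMul]
  have hβ1 : β 1 = α 1 1 := by
    simpa using (hβ 1 1).symm
  rw [inducedProj_u, hN]
  simp [hβ1, A.isTwoCocycle.map_one_snd]

lemma inducedProj_mul_u (hβ : ∀ n n' : N, α n n' = β n * β n' * (β (n * n'))⁻¹)
    (x : A.carrier) (n : N) :
    inducedProj A N β (x * A.u n) = (β n : ℂ) • inducedProj A N β x := by
  suffices h : (inducedProj A N β).comp (LinearMap.mulRight ℂ (A.u n : A.carrier)) =
      (β n : ℂ) • inducedProj A N β from LinearMap.congr_fun h x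
  refine A.basis.ext fun g => ?_
  have hmk : ((g * n : G) : G ⧸ N) = g := QuotientGroup.mk_mul_of_mem g n.2
  have hm : outInvMul N (g * n) = outInvMul N g * n := by
    ext
    simp [outInvMul, hmk, mul_assoc]
  simp only [LinearMap.comp_apply, LinearMap.mulRight_apply, LinearMap.smul_apply, A.basis_eq,
    A.u_mul, map_smul, inducedProj_u, smul_smul, hmk, hm]
  congr 1
  set s := (g : G ⧸ N).out
  set m := outInvMul N g
  -- the cocycle identity at `(s, m, n)` together with `α|_N = ∂β`
  have hc := congrArg (fun u : ℂˣ => (u : ℂ)) (A.isTwoCocycle s m n)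
  rw [out_mul_outInvMul, hβ m n] at hc
  push_cast at hc ⊢
  field_simp at hc ⊢
  linear_combination hc

variable [Finite (G ⧸ N)]

variable (β) in
noncomputable def inducedRep : A.carrier →ₗ[ℂ] Module.End ℂ (G ⧸ N → ℂ) :=
  ((Pi.basisFun ℂ (G ⧸ N)).constr ℂ).toLinearMap ∘ₗ
    LinearMap.pi fun h => inducedProj A N β ∘ₗ LinearMap.mulRight ℂ (A.u h.out : A.carrier)

lemma inducedRep_apply_single (a : A.carrier) (h : G ⧸ N) :
    inducedRep A N β a (Pi.single h 1) = inducedProj A N β (a * A.u h.out) := by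
  rw [← Pi.basisFun_apply ℂ, inducedRep, LinearMap.comp_apply, LinearEquiv.coe_coe,
    Module.Basis.constr_basis]
  rfl

lemma inducedRep_apply_inducedProj (hβ : ∀ n n' : N, α n n' = β n * β n' * (β (n * n'))⁻¹)
    (a x : A.carrier) :
    inducedRep A N β a (inducedProj A N β x) = inducedProj A N β (a * x) := by
  suffices h : inducedRep A N β a ∘ₗ inducedProj A N β =
      inducedProj A N β ∘ₗ LinearMap.mulLeft ℂ a from LinearMap.congr_fun h x
  refine A.basis.ext fun g => ?_
  simp only [LinearMap.comp_apply, LinearMap.mulLeft_apply, A.basis_eq]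
  have hu : (A.u g : A.carrier) = (((α (g : G ⧸ N).out (outInvMul N g))⁻¹ : ℂˣ) : ℂ) •
      (A.u (g : G ⧸ N).out * A.u (outInvMul N g) : A.carrier) := by
    rw [A.u_mul, out_mul_outInvMul, smul_smul, ← Units.val_mul, inv_mul_cancel, Units.val_one,
      one_smul]
  rw [inducedProj_u, map_smul, inducedRep_apply_single, hu, mul_smul_comm, ← mul_assoc,
    map_smul, inducedProj_mul_u A N hβ, smul_smul, Units.val_mul]

variable (β) in
noncomputable def inducedAlgHom (hβ : ∀ n n' : N, α n n' = β n * β n' * (β (n * n'))⁻¹) :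
    A.carrier →ₐ[ℂ] Module.End ℂ (G ⧸ N → ℂ) :=
  AlgHom.ofLinearMap (inducedRep A N β)
    ((Pi.basisFun ℂ (G ⧸ N)).ext fun h => by
      simp [inducedRep_apply_single, inducedProj_u_out A N hβ])
    (fun a b => (Pi.basisFun ℂ (G ⧸ N)).ext fun h => by
      simp [inducedRep_apply_single, mul_assoc, inducedRep_apply_inducedProj A N hβ])

lemma inducedAlgHom_u_mem_elemComp [N.Normal]
    (hβ : ∀ n n' : N, α n n' = β n * β n' * (β (n * n'))⁻¹) (g : G) : inducedAlgHom A N β hβ (A.u g) ∈ elemComp (G ⧸ N) g := by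
  refine mem_elemComp_iff.mpr fun h => ?_
  have hmk : ((g * h.out : G) : G ⧸ N) = g * h := by
    rw [QuotientGroup.mk_mul, QuotientGroup.out_eq']
  rw [inducedAlgHom, AlgHom.ofLinearMap_apply, inducedRep_apply_single, A.u_mul, map_smul,
    inducedProj_u, smul_smul, hmk]
  exact ⟨_, rfl⟩

theorem exists_gradedAlgEquiv_of_u_mem [Finite G] (A : TwistedGroupAlgebra G α)
    [IsSimpleRing A.carrier] (N : Subgroup G) [N.Normal] [DecidableEq (G ⧸ N)]
    (φ : A.carrier →ₐ[ℂ] Module.End ℂ (G ⧸ N → ℂ))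
    (hφ : ∀ g : G, φ (A.u g) ∈ elemComp (G ⧸ N) g)
    (hcard : Nat.card N = Nat.card (G ⧸ N)) :
    ∃ ψ : A.carrier ≃ₐ[ℂ] Module.End ℂ (G ⧸ N → ℂ),
      ∀ c, Submodule.map ψ.toLinearMap (A.quotComp N c) = elemComp (G ⧸ N) c := by
  have : FiniteDimensional ℂ A.carrier := Module.Finite.of_basis A.basis
  have := Fintype.ofFinite (G ⧸ N)
  have hdim : Module.finrank ℂ A.carrier = Module.finrank ℂ (Module.End ℂ (G ⧸ N → ℂ)) := by
    rw [Module.finrank_eq_nat_card_basis A.basis, Module.finrank_linearMap, Module.finrank_pi,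
      ← Nat.card_eq_fintype_card, ← hcard, ← sq, N.card_sq_eq_card_iff.mpr hcard]
  have hinj : Function.Injective φ := φ.toRingHom.injective
  have hbij : Function.Bijective φ := ⟨hinj,
    (LinearMap.injective_iff_surjective_of_finrank_eq_finrank (f := φ.toLinearMap) hdim).mp hinj⟩
  refine ⟨AlgEquiv.ofBijective φ hbij, fun c => Submodule.eq_of_le_of_finrank_eq ?_ ?_⟩
  · rw [quotComp, Submodule.map_span, Submodule.span_le]
    rintro _ ⟨_, ⟨g, rfl, rfl⟩, rfl⟩
    exact hφ g
  · rw [← AlgEquiv.toLinearEquiv_toLinearMap, LinearEquiv.finrank_map_eq, finrank_quotComp,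
      finrank_elemComp, hcard]

end TwistedGroupAlgebra

open TwistedGroupAlgebra in
theorem stmt10_general {G : Type} [Group G] [Fintype G] (α : G → G → ℂˣ)
    (A : TwistedGroupAlgebra G α) (hA : IsSimpleRing A.carrier)
    (N : Subgroup G) [N.Normal] [DecidableEq (G ⧸ N)] :
    (∃ ψ : A.carrier ≃ₐ[ℂ] Module.End ℂ ((G ⧸ N) → ℂ),
      ∀ c : G ⧸ N, Submodule.map ψ.toLinearMap (A.quotComp N c) = elemComp (G ⧸ N) c) ↔
    ((∃ β : N → ℂˣ, ∀ n n' : N, α n n' = β n * β n' * (β (n * n'))⁻¹) ∧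
      Nat.card N ^ 2 = Nat.card G) := by
  rw [N.card_sq_eq_card_iff]
  constructor
  · rintro ⟨ψ, hψ⟩
    have hmem : ∀ g : G, ψ (A.u g) ∈ elemComp (G ⧸ N) g := fun g =>
      hψ g ▸ Submodule.mem_map_of_mem (A.u_mem_quotComp N g)
    refine ⟨A.restTrivial_of_common_eigenvector N ψ.toAlgHom (v := Pi.single 1 1) (by simp)
      fun n hn => ?_, ?_⟩
    · obtain ⟨s, hs⟩ := mem_elemComp_iff.mp (hmem n) 1
      rw [(QuotientGroup.eq_one_iff n).mpr hn, one_mul] at hs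
      exact ⟨s, hs⟩
    · rw [← A.finrank_quotComp N 1, ← finrank_elemComp (1 : G ⧸ N), ← hψ 1,
        ← AlgEquiv.toLinearEquiv_toLinearMap, LinearEquiv.finrank_map_eq]
  · rintro ⟨⟨β, hβ⟩, hcard⟩
    exact A.exists_gradedAlgEquiv_of_u_mem N (A.inducedAlgHom N β hβ)
      (A.inducedAlgHom_u_mem_elemComp N hβ) hcard

open TwistedGroupAlgebra in
/-- **Theorem C.** Let `ℂ^αG` be a simple ring, `N ⊴ G`, `H := G/N`.
There is a ℂ-algebra isomorphism `ψ : ℂ^αG → End_ℂ(ℂ[H])` carrying the quotient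
`H`-grading of `ℂ^αG` onto the elementary crossed product `H`-grading of
`End_ℂ(ℂ[H])` iff `N` is a Lagrangian with respect to the class of `α`. -/
theorem stmt10 {G : Type} [Group G] [Fintype G] (α : G → G → ℂˣ) (hα : IsTwoCocycle α)
    (A : TwistedGroupAlgebra G α) (hA : IsSimpleRing A.carrier)
    (N : Subgroup G) [N.Normal] [DecidableEq (G ⧸ N)] :
    (∃ ψ : A.carrier ≃ₐ[ℂ] Module.End ℂ ((G ⧸ N) → ℂ),
      ∀ c : G ⧸ N, Submodule.map ψ.toLinearMap (A.quotComp N c) = elemComp (G ⧸ N) c) ↔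
    ((∃ β : N → ℂˣ, ∀ n n' : N, α n n' = β n * β n' * (β (n * n'))⁻¹) ∧
      Nat.card N ^ 2 = Nat.card G) :=
  stmt10_general α A hA N
end

section
/- Let n = l²·m where l ≥ 2 and m ≥ 1 are integers, let A = C_n × C_n be the direct product of two cyclic groups of order n, and let α : A × A → ℂˣ be a 2-cocycle such that the twisted group algebra ℂ^αA is a simple ring. Then there exist subgroups L₁, L₂ ≤ A, each a Lagrangian with respect to the class of α (i.e. the restriction of the class of α to Lᵢ is trivial and |Lᵢ| = n), such that the quotient A/L₁ is cyclic of order n while A/L₂ ≅ C_l × C_{l·m} is not cyclic; in particular A/L₁ and A/L₂ are not isomorphic. -/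
/-- The group `C_n × C_n`. -/
abbrev CnCn (n : ℕ) : Type := Multiplicative (ZMod n) × Multiplicative (ZMod n)

/-!
For a 2-cocycle `α` on an abelian group, `⟨g, h⟩ := α g h / α h g` is bimultiplicative.
On a subgroup where this pairing vanishes, `α` is symmetric, so it defines an abelian
extension of the subgroup by `ℂˣ`; the extension splits because `ℂˣ` is divisible, and a
splitting trivialises `α`. For `d₁ * d₂ = n`, the kernel of `C_n × C_n → C_{d₁} × C_{d₂}` is
generated by `e₁ ^ d₁` and `e₂ ^ d₂`, and `⟨e₁ ^ d₁, e₂ ^ d₂⟩ = ⟨e₁ ^ n, e₂⟩ = 1`.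
The choices `(d₁, d₂) = (1, n)` and `(l, l * m)` give `L₁` and `L₂`; the quotient
`C_l × C_{lm}` is not cyclic because `l` and `l * m` are not coprime.
-/

noncomputable instance : RootableBy ℂˣ ℕ :=
  rootableByOfPowLeftSurj _ _ fun {n} hn z => by
    obtain ⟨w, hw⟩ := IsAlgClosed.exists_pow_nat_eq (z : ℂ) (Nat.pos_of_ne_zero hn)
    have hw0 : w ≠ 0 := by rintro rfl; exact z.ne_zero (by rw [← hw, zero_pow hn])
    exact ⟨Units.mk0 w hw0, Units.ext (by simpa using hw)⟩

noncomputable instance : DivisibleBy (Additive ℂˣ) ℤ :=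
  letI := Group.rootableByIntOfRootableByNat ℂˣ
  { div := fun z n => .ofMul (RootableBy.root z.toMul n)
    div_zero := fun z => congrArg Additive.ofMul (RootableBy.root_zero z.toMul)
    div_cancel := fun z hn => congrArg Additive.ofMul (RootableBy.root_cancel z.toMul hn) }

section Cocycle

variable {G : Type} {α : G → G → ℂˣ}

theorem IsTwoCocycle.map_one_left [Group G] (hα : IsTwoCocycle α) (g : G) : α 1 g = α 1 1 :=
  mul_right_cancel (b := α 1 g) (by simpa using (hα 1 1 g).symm)

theorem IsTwoCocycle.map_one_right [Group G] (hα : IsTwoCocycle α) (g : G) : α g 1 = α 1 1 :=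
  mul_right_cancel (b := α g 1) (by simpa using hα g 1 1)

@[ext]
structure CocycleExtension (α : G → G → ℂˣ) where
  scalar : ℂˣ
  base : G

@[reducible]
def CocycleExtension.commGroup [CommGroup G] (hα : IsTwoCocycle α)
    (hsymm : ∀ g h, α g h = α h g) : CommGroup (CocycleExtension α) where
  mul x y := ⟨x.scalar * y.scalar * α x.base y.base, x.base * y.base⟩
  one := ⟨(α 1 1)⁻¹, 1⟩
  inv x := ⟨(x.scalar * α x.base⁻¹ x.base * α 1 1)⁻¹, x.base⁻¹⟩
  mul_assoc x y z := by
    refine CocycleExtension.ext ?_ (mul_assoc _ _ _)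
    show x.scalar * y.scalar * α x.base y.base * z.scalar * α (x.base * y.base) z.base =
      x.scalar * (y.scalar * z.scalar * α y.base z.base) * α x.base (y.base * z.base)
    calc _ = x.scalar * y.scalar * z.scalar * (α x.base y.base * α (x.base * y.base) z.base) := by
          ac_rfl
      _ = _ := by rw [hα]; ac_rfl
  one_mul x := by
    refine CocycleExtension.ext ?_ (one_mul _)
    show (α 1 1)⁻¹ * x.scalar * α 1 x.base = x.scalar
    simp [hα.map_one_left, mul_comm]
  mul_one x := by
    refine CocycleExtension.ext ?_ (mul_one _)
    show x.scalar * (α 1 1)⁻¹ * α x.base 1 = x.scalar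
    simp [hα.map_one_right]
  inv_mul_cancel x := by
    refine CocycleExtension.ext ?_ (inv_mul_cancel _)
    show (x.scalar * α x.base⁻¹ x.base * α 1 1)⁻¹ * x.scalar * α x.base⁻¹ x.base =
      (α 1 1)⁻¹
    rw [mul_assoc, mul_inv_rev, inv_mul_cancel_right]
  mul_comm x y := by
    refine CocycleExtension.ext ?_ (mul_comm _ _)
    show x.scalar * y.scalar * α x.base y.base = y.scalar * x.scalar * α y.base x.base
    rw [hsymm, mul_comm x.scalar]

theorem IsTwoCocycle.exists_coboundary_of_symm [CommGroup G] (hα : IsTwoCocycle α)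
    (hsymm : ∀ g h, α g h = α h g) :
    ∃ β : G → ℂˣ, ∀ g h, α g h = β g * β h * (β (g * h))⁻¹ := by
  let := CocycleExtension.commGroup hα hsymm
  let ι : ℂˣ →* CocycleExtension α :=
    { toFun z := ⟨z * (α 1 1)⁻¹, 1⟩
      map_one' := CocycleExtension.ext (one_mul _) rfl
      map_mul' z w := CocycleExtension.ext (by
        show z * w * (α 1 1)⁻¹ = z * (α 1 1)⁻¹ * (w * (α 1 1)⁻¹) * α 1 1
        rw [mul_right_comm z, mul_assoc _ _ (α 1 1), inv_mul_cancel_right]) (mul_one 1).symm }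
  have hι : Function.Injective ι := fun z w h =>
    mul_right_cancel (congrArg CocycleExtension.scalar h)
  obtain ⟨r, hr⟩ := (Module.Baer.of_divisible (Additive ℂˣ)).extension_property_addMonoidHom
    (MonoidHom.toAdditive ι) hι (AddMonoidHom.id _)
  let ρ : CocycleExtension α →* ℂˣ := MonoidHom.toAdditive.symm r
  have hρ : ∀ z, ρ (ι z) = z := fun z =>
    congrArg Additive.toMul (DFunLike.congr_fun hr (.ofMul z))
  have hlift : ∀ g h : G,
      (⟨1, g⟩ * ⟨1, h⟩ : CocycleExtension α) = ι (α g h) * ⟨1, g * h⟩ := by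
    intro g h
    refine CocycleExtension.ext ?_ (one_mul _).symm
    show 1 * 1 * α g h = α g h * (α 1 1)⁻¹ * 1 * α 1 (g * h)
    simp [hα.map_one_left]
  refine ⟨fun g => ρ ⟨1, g⟩, fun g h => ?_⟩
  rw [← map_mul, hlift, map_mul, hρ, mul_inv_cancel_right]

def commutatorPairing (α : G → G → ℂˣ) (g h : G) : ℂˣ := α g h * (α h g)⁻¹

theorem commutatorPairing_self (g : G) : commutatorPairing α g g = 1 :=
  mul_inv_cancel _

theorem commutatorPairing_swap (g h : G) :
    commutatorPairing α g h = (commutatorPairing α h g)⁻¹ := by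
  simp [commutatorPairing]

variable [CommGroup G]

theorem commutatorPairing_mul_left (hα : IsTwoCocycle α) (g h k : G) :
    commutatorPairing α (g * h) k = commutatorPairing α g k * commutatorPairing α h k := by
  have h1 := hα g h k
  have h2 := hα k g h
  have h3 := hα g k h
  rw [mul_comm h k] at h1
  rw [mul_comm k g] at h2
  simp only [commutatorPairing, Units.ext_iff, Units.val_mul, Units.val_inv_eq_inv_val] at *
  have key : (α g h : ℂ) * (α (g * h) k * α k g * α k h) =
      α g h * (α g k * α h k * α k (g * h)) := by
    linear_combination (α k g * α k h : ℂ) * h1 + (α g k * α h k : ℂ) * h2 -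
      (α h k * α k g : ℂ) * h3
  have := mul_left_cancel₀ (α g h).ne_zero key
  field_simp
  linear_combination this

def commutatorPairingLeft (hα : IsTwoCocycle α) (k : G) : G →* ℂˣ :=
  MonoidHom.mk' (commutatorPairing α · k) fun g h => commutatorPairing_mul_left hα g h k

theorem commutatorPairing_one_left (hα : IsTwoCocycle α) (h : G) :
    commutatorPairing α 1 h = 1 :=
  map_one (commutatorPairingLeft hα h)

theorem commutatorPairing_pow_left (hα : IsTwoCocycle α) (g h : G) (k : ℕ) :
    commutatorPairing α (g ^ k) h = commutatorPairing α g h ^ k :=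
  map_pow (commutatorPairingLeft hα h) g k

theorem commutatorPairing_pow_right (hα : IsTwoCocycle α) (g h : G) (k : ℕ) :
    commutatorPairing α g (h ^ k) = commutatorPairing α g h ^ k := by
  rw [commutatorPairing_swap, commutatorPairing_pow_left hα, commutatorPairing_swap h, inv_pow,
    inv_inv]

theorem commutatorPairing_pow_pow_eq_one (hα : IsTwoCocycle α) {g : G} {n i j : ℕ}
    (hg : g ^ n = 1) (hij : n ∣ i * j) (h : G) :
    commutatorPairing α (g ^ i) (h ^ j) = 1 := by
  obtain ⟨c, hc⟩ := hij
  rw [commutatorPairing_pow_left hα, commutatorPairing_pow_right hα, ← pow_mul, mul_comm j, hc,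
    pow_mul, ← commutatorPairing_pow_left hα, hg, commutatorPairing_one_left hα, one_pow]

theorem commutatorPairing_eq_one_of_mem_closure (hα : IsTwoCocycle α) {S : Set G}
    (hS : ∀ s ∈ S, ∀ t ∈ S, commutatorPairing α s t = 1) {x y : G}
    (hx : x ∈ Subgroup.closure S) (hy : y ∈ Subgroup.closure S) :
    commutatorPairing α x y = 1 := by
  have hxS : ∀ t ∈ S, commutatorPairing α x t = 1 := fun t ht =>
    (Subgroup.closure_le (commutatorPairingLeft hα t).ker).2 (fun s hs => hS s hs t ht) hx
  have hyx : commutatorPairing α y x = 1 :=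
    (Subgroup.closure_le (commutatorPairingLeft hα x).ker).2
      (fun t ht => by
        show commutatorPairing α t x = 1
        rw [commutatorPairing_swap, hxS t ht, inv_one]) hy
  rw [commutatorPairing_swap, hyx, inv_one]

theorem restTrivial_of_le_closure (hα : IsTwoCocycle α) {S : Set G}
    (hS : ∀ s ∈ S, ∀ t ∈ S, commutatorPairing α s t = 1) {N : Subgroup G}
    (hN : N ≤ Subgroup.closure S) : TwistedGroupAlgebra.RestTrivial α N :=
  IsTwoCocycle.exists_coboundary_of_symm (α := fun x y : N => α x y) (fun x y z => hα x y z)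
    fun x y => mul_inv_eq_one.1 <|
      commutatorPairing_eq_one_of_mem_closure hα hS (hN x.2) (hN y.2)

end Cocycle

section ReduceMod

variable {n d₁ d₂ : ℕ}

theorem card_multiplicative_zmod (d : ℕ) : Nat.card (Multiplicative (ZMod d)) = d :=
  (Nat.card_congr Multiplicative.toAdd).trans (Nat.card_zmod d)

def reduceMod (h : d₁ * d₂ = n) :
    CnCn n →* Multiplicative (ZMod d₁) × Multiplicative (ZMod d₂) :=
  (AddMonoidHom.toMultiplicative (ZMod.castHom (Dvd.intro _ h) (ZMod d₁)).toAddMonoidHom).prodMap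
    (AddMonoidHom.toMultiplicative (ZMod.castHom (Dvd.intro_left _ h) (ZMod d₂)).toAddMonoidHom)

theorem reduceMod_surjective (h : d₁ * d₂ = n) : Function.Surjective (reduceMod h) :=
  Prod.map_surjective.2
    ⟨ZMod.castHom_surjective (Dvd.intro _ h), ZMod.castHom_surjective (Dvd.intro_left _ h)⟩

theorem ker_castHom_le_zpowers [NeZero n] {d : ℕ} (hd : d ∣ n) :
    (AddMonoidHom.toMultiplicative (ZMod.castHom hd (ZMod d)).toAddMonoidHom).ker ≤
      Subgroup.zpowers (Multiplicative.ofAdd (1 : ZMod n) ^ d) := by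
  intro x hx
  obtain ⟨k, hk⟩ : d ∣ x.toAdd.val := by
    rw [← ZMod.natCast_eq_zero_iff, ← ZMod.cast_natCast hd, ZMod.natCast_zmod_val]
    exact congrArg Multiplicative.toAdd hx
  have hx' : x = (Multiplicative.ofAdd (1 : ZMod n) ^ d) ^ k := by
    rw [← pow_mul, ← ofAdd_nsmul, nsmul_one, ← hk, ZMod.natCast_zmod_val]
    rfl
  exact hx' ▸ Subgroup.npow_mem_zpowers _ k

theorem ker_reduceMod_le_closure [NeZero n] (h : d₁ * d₂ = n) :
    (reduceMod h).ker ≤ Subgroup.closure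
      {MonoidHom.inl _ _ (Multiplicative.ofAdd 1 ^ d₁),
        MonoidHom.inr _ _ (Multiplicative.ofAdd 1 ^ d₂)} := by
  rw [reduceMod, MonoidHom.ker_prodMap]
  refine (Subgroup.prod_mono (ker_castHom_le_zpowers _) (ker_castHom_le_zpowers _)).trans ?_
  rw [Subgroup.prod_le_iff, MonoidHom.map_zpowers, MonoidHom.map_zpowers, Subgroup.zpowers_le,
    Subgroup.zpowers_le]
  exact ⟨Subgroup.subset_closure (by simp), Subgroup.subset_closure (by simp)⟩

theorem restTrivial_ker_reduceMod [NeZero n] {α : CnCn n → CnCn n → ℂˣ}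
    (hα : IsTwoCocycle α) (h : d₁ * d₂ = n) :
    TwistedGroupAlgebra.RestTrivial α (reduceMod h).ker := by
  refine restTrivial_of_le_closure hα ?_ (ker_reduceMod_le_closure h)
  have hu : (MonoidHom.inl _ _ (Multiplicative.ofAdd (1 : ZMod n)) : CnCn n) ^ n = 1 := by
    have hpow : Multiplicative.ofAdd (1 : ZMod n) ^ n = 1 := by
      simpa only [card_multiplicative_zmod] using
        pow_card_eq_one' (x := Multiplicative.ofAdd (1 : ZMod n))
    rw [← map_pow, hpow, map_one]
  have hn : n ∣ d₁ * d₂ := h ▸ dvd_rfl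
  simp only [Set.mem_insert_iff, Set.mem_singleton_iff, map_pow]
  rintro s (rfl | rfl) t (rfl | rfl)
  · exact commutatorPairing_self _
  · exact commutatorPairing_pow_pow_eq_one hα hu hn _
  · rw [commutatorPairing_swap, commutatorPairing_pow_pow_eq_one hα hu hn, inv_one]
  · exact commutatorPairing_self _

theorem card_ker_reduceMod [NeZero n] (h : d₁ * d₂ = n) : Nat.card (reduceMod h).ker = n := by
  have hcard := Subgroup.card_eq_card_quotient_mul_card_subgroup (reduceMod h).ker
  rw [Nat.card_congr (QuotientGroup.quotientKerEquivOfSurjective _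
      (reduceMod_surjective h)).toEquiv, Nat.card_prod, Nat.card_prod, card_multiplicative_zmod,
    card_multiplicative_zmod, card_multiplicative_zmod, h] at hcard
  exact Nat.eq_of_mul_eq_mul_left (NeZero.pos n) hcard.symm

end ReduceMod

open TwistedGroupAlgebra in
theorem stmt15_general (l m n : ℕ) (hl : 2 ≤ l) (hm : 1 ≤ m) (hn : n = l ^ 2 * m)
    (α : CnCn n → CnCn n → ℂˣ) (hα : IsTwoCocycle α) :
    ∃ L₁ L₂ : Subgroup (CnCn n),
      ((∃ β : L₁ → ℂˣ, ∀ x y : L₁, α x y = β x * β y * (β (x * y))⁻¹) ∧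
        Nat.card L₁ = n) ∧
      ((∃ β : L₂ → ℂˣ, ∀ x y : L₂, α x y = β x * β y * (β (x * y))⁻¹) ∧
        Nat.card L₂ = n) ∧
      IsCyclic (CnCn n ⧸ L₁) ∧ Nat.card (CnCn n ⧸ L₁) = n ∧
      Nonempty ((CnCn n ⧸ L₂) ≃* (Multiplicative (ZMod l) × Multiplicative (ZMod (l * m)))) ∧
      ¬ IsCyclic (CnCn n ⧸ L₂) ∧
      IsEmpty ((CnCn n ⧸ L₁) ≃* (CnCn n ⧸ L₂)) := by
  have : NeZero n := ⟨by subst hn; positivity⟩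
  have h₁ : 1 * n = n := one_mul n
  have h₂ : l * (l * m) = n := by rw [hn]; ring
  let e₁ := (QuotientGroup.quotientKerEquivOfSurjective _ (reduceMod_surjective h₁)).trans
    (MulEquiv.uniqueProd (N := Multiplicative (ZMod 1)))
  let e₂ := QuotientGroup.quotientKerEquivOfSurjective _ (reduceMod_surjective h₂)
  have hcyc₁ : IsCyclic (CnCn n ⧸ (reduceMod h₁).ker) := e₁.symm.isCyclic.1 inferInstance
  have hncyc₂ : ¬ IsCyclic (CnCn n ⧸ (reduceMod h₂).ker) := by
    rw [e₂.isCyclic, Group.isCyclic_prod_iff, card_multiplicative_zmod, card_multiplicative_zmod,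
      Nat.coprime_mul_iff_right, Nat.coprime_self]
    omega
  refine ⟨_, _, ⟨restTrivial_ker_reduceMod hα h₁, card_ker_reduceMod h₁⟩,
    ⟨restTrivial_ker_reduceMod hα h₂, card_ker_reduceMod h₂⟩, hcyc₁,
    (Nat.card_congr e₁.toEquiv).trans (card_multiplicative_zmod n), ⟨e₂⟩, hncyc₂,
    ⟨fun e => hncyc₂ (isCyclic_of_surjective e e.surjective)⟩⟩

open TwistedGroupAlgebra in
/-- Let `n = l²·m` with `l ≥ 2`, `m ≥ 1`, let `A = C_n × C_n`, and
let `α` be a 2-cocycle on `A` with `ℂ^αA` a simple ring.  Then there are Lagrangians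
`L₁, L₂ ≤ A` with respect to the class of `α` (each of order `n` and with trivial
restricted class) such that `A/L₁` is cyclic of order `n`, while
`A/L₂ ≅ C_l × C_{l·m}` is not cyclic; in particular `A/L₁ ≇ A/L₂`. -/
theorem stmt15 (l m n : ℕ) (hl : 2 ≤ l) (hm : 1 ≤ m) (hn : n = l ^ 2 * m)
    (α : CnCn n → CnCn n → ℂˣ) (hα : IsTwoCocycle α)
    (A : TwistedGroupAlgebra (CnCn n) α) (hA : IsSimpleRing A.carrier) :
    ∃ L₁ L₂ : Subgroup (CnCn n),
      ((∃ β : L₁ → ℂˣ, ∀ x y : L₁, α x y = β x * β y * (β (x * y))⁻¹) ∧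
        Nat.card L₁ = n) ∧
      ((∃ β : L₂ → ℂˣ, ∀ x y : L₂, α x y = β x * β y * (β (x * y))⁻¹) ∧
        Nat.card L₂ = n) ∧
      IsCyclic (CnCn n ⧸ L₁) ∧ Nat.card (CnCn n ⧸ L₁) = n ∧
      Nonempty ((CnCn n ⧸ L₂) ≃* (Multiplicative (ZMod l) × Multiplicative (ZMod (l * m)))) ∧
      ¬ IsCyclic (CnCn n ⧸ L₂) ∧
      IsEmpty ((CnCn n ⧸ L₁) ≃* (CnCn n ⧸ L₂)) :=
  stmt15_general l m n hl hm hn α hα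
end

section
/- Let C₄ = ⟨x⟩ be cyclic of order 4, let C₂×C₂ = ⟨σ⟩×⟨τ⟩ be the Klein four-group, let C₂∗C₂ = ⟨a⟩∗⟨b⟩ be the free product of two cyclic groups of order 2, and let C₂ = ⟨y⟩ be cyclic of order 2. Let ψ₁ : C₄ → C₂ send x ↦ y, let ψ₂ : C₂×C₂ → C₂ send σ ↦ y and τ ↦ y, and let ψ₃ : C₂∗C₂ → C₂ send a ↦ y and b ↦ y. Set G₄ := { (g₁,g₂,g₃) ∈ C₄ × (C₂×C₂) × (C₂∗C₂) : ψ₁(g₁) = ψ₂(g₂) = ψ₃(g₃) }, and put z₁ := (x, σ, a), z₂ := (x, σ, b), z₃ := (x², στ, 1). Then: (i) G₄ is generated by z₁, z₂, z₃; (ii) z₃ is central in G₄ of order 2, and G₄ is the internal direct product of H₄ := ⟨z₁, z₂⟩ and ⟨z₃⟩, so G₄ ≅ H₄ × C₂; (iii) there is a well-defined surjective homomorphism β₄ : H₄ → C₂∗C₂ with β₄(z₁) = a and β₄(z₂) = b, whose kernel is the subgroup {1, (x², 1, 1)}, which is central of order 2 in H₄, and z₁² = z₂² = (x², 1, 1).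 -/
open Monoid

/-- The cyclic group `C₂`. -/
abbrev C2 : Type := Multiplicative (ZMod 2)
/-- The cyclic group `C₄ = ⟨x⟩`. -/
abbrev C4 : Type := Multiplicative (ZMod 4)
/-- The Klein four-group `C₂ × C₂ = ⟨σ⟩ × ⟨τ⟩`. -/
abbrev V4 : Type := C2 × C2
/-- The free product `C₂ ∗ C₂ = ⟨a⟩ ∗ ⟨b⟩`. -/
abbrev F22 : Type := Coprod C2 C2

/-- The generator `x` of `C₄`. -/
def x4 : C4 := Multiplicative.ofAdd 1
/-- The generator `σ` of the Klein four-group. -/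
def sv : V4 := (Multiplicative.ofAdd 1, 1)
/-- The generator `τ` of the Klein four-group. -/
def tv : V4 := (1, Multiplicative.ofAdd 1)
/-- The generator `a` of the first factor of `C₂ ∗ C₂`. -/
def fa : F22 := Coprod.inl (Multiplicative.ofAdd 1)
/-- The generator `b` of the second factor of `C₂ ∗ C₂`. -/
def fb : F22 := Coprod.inr (Multiplicative.ofAdd 1)

/-- `ψ₁ : C₄ → C₂ = ⟨y⟩`, `x ↦ y`. -/
def psi1 : C4 →* C2 :=
  AddMonoidHom.toMultiplicative
    ((ZMod.castHom (by norm_num : (2 : ℕ) ∣ 4) (ZMod 2)).toAddMonoidHom)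
/-- `ψ₂ : C₂ × C₂ → C₂ = ⟨y⟩`, `σ, τ ↦ y`. -/
def psi2 : V4 →* C2 := MonoidHom.fst C2 C2 * MonoidHom.snd C2 C2
/-- `ψ₃ : C₂ ∗ C₂ → C₂ = ⟨y⟩`, `a, b ↦ y`. -/
def psi3 : F22 →* C2 := Coprod.lift (MonoidHom.id C2) (MonoidHom.id C2)

/-- The ambient direct product `C₄ × (C₂×C₂) × (C₂∗C₂)`. -/
abbrev T4 : Type := C4 × V4 × F22

/-- The fiber product `G₄ = {(g₁,g₂,g₃) : ψ₁ g₁ = ψ₂ g₂ = ψ₃ g₃}`, realized as the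
kernel of `(g₁,g₂,g₃) ↦ (ψ₁ g₁ · (ψ₂ g₂)⁻¹, ψ₂ g₂ · (ψ₃ g₃)⁻¹)`. -/
def G4 : Subgroup T4 :=
  (((psi1.comp (MonoidHom.fst C4 (V4 × F22))) *
      (psi2.comp ((MonoidHom.fst V4 F22).comp (MonoidHom.snd C4 (V4 × F22))))⁻¹).prod
    ((psi2.comp ((MonoidHom.fst V4 F22).comp (MonoidHom.snd C4 (V4 × F22)))) *
      (psi3.comp ((MonoidHom.snd V4 F22).comp (MonoidHom.snd C4 (V4 × F22))))⁻¹)).ker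

/-- `z₁ = (x, σ, a)`. -/
def z1 : T4 := (x4, (sv, fa))
/-- `z₂ = (x, σ, b)`. -/
def z2 : T4 := (x4, (sv, fb))
/-- `z₃ = (x², στ, 1)`. -/
def z3 : T4 := (x4 ^ 2, (sv * tv, 1))
/-- The central element `(x², 1, 1)`. -/
def e0 : T4 := (x4 ^ 2, (1, 1))
/-- `H₄ = ⟨z₁, z₂⟩`. -/
def H4 : Subgroup T4 := Subgroup.closure {z1, z2}


lemma mem_G4_iff (p : T4) :
    p ∈ G4 ↔ (psi1 p.1 = psi2 p.2.1 ∧ psi2 p.2.1 = psi3 p.2.2) := by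
  simp [G4, MonoidHom.mem_ker, Prod.ext_iff, mul_inv_eq_one]

/-! ### Auxiliary lemmas -/

lemma psi3_fa : psi3 fa = Multiplicative.ofAdd 1 := by simp [psi3, fa]
lemma psi3_fb : psi3 fb = Multiplicative.ofAdd 1 := by simp [psi3, fb]

lemma fa_sq : fa * fa = 1 := by
  rw [fa, ← map_mul]
  have : (Multiplicative.ofAdd 1 : C2) * Multiplicative.ofAdd 1 = 1 := by decide
  rw [this, map_one]

lemma fb_sq : fb * fb = 1 := by
  rw [fb, ← map_mul]
  have : (Multiplicative.ofAdd 1 : C2) * Multiplicative.ofAdd 1 = 1 := by decide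
  rw [this, map_one]

lemma z1_mem_G4 : z1 ∈ G4 := by
  rw [mem_G4_iff]
  constructor
  · decide
  · rw [show (z1.2.2 : F22) = fa from rfl, psi3_fa]; decide

lemma z2_mem_G4 : z2 ∈ G4 := by
  rw [mem_G4_iff]
  constructor
  · decide
  · rw [show (z2.2.2 : F22) = fb from rfl, psi3_fb]; decide

lemma z3_mem_G4 : z3 ∈ G4 := by
  rw [mem_G4_iff]
  constructor
  · decide
  · rw [show (z3.2.2 : F22) = 1 from rfl, map_one]; decide

lemma e0_mem_G4 : e0 ∈ G4 := by
  rw [mem_G4_iff]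
  constructor
  · decide
  · rw [show (e0.2.2 : F22) = 1 from rfl, map_one]; decide

lemma z1_sq : z1 ^ 2 = e0 := by
  have h3 : (z1 ^ 2).2.2 = (1 : F22) := by
    show fa * fa = 1
    exact fa_sq
  refine Prod.ext (by decide) (Prod.ext (by decide) h3)

lemma z2_sq : z2 ^ 2 = e0 := by
  have h3 : (z2 ^ 2).2.2 = (1 : F22) := by
    show fb * fb = 1
    exact fb_sq
  refine Prod.ext (by decide) (Prod.ext (by decide) h3)

lemma z3_sq : z3 ^ 2 = 1 := by
  refine Prod.ext (by decide) (Prod.ext (by decide) ?_)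
  show (1 : F22) * 1 = 1
  exact one_mul 1

lemma e0_sq : e0 ^ 2 = 1 := by
  refine Prod.ext (by decide) (Prod.ext (by decide) ?_)
  show (1 : F22) * 1 = 1
  exact one_mul 1

lemma z3_ne_one : z3 ≠ 1 := by
  intro h
  have : z3.2.1 = (1 : V4) := congrArg (fun p : T4 => p.2.1) h
  exact absurd this (by decide)

lemma e0_ne_one : e0 ≠ 1 := by
  intro h
  have : e0.1 = (1 : C4) := congrArg (fun p : T4 => p.1) h
  exact absurd this (by decide)

lemma z3_comm (p : T4) : p * z3 = z3 * p := by
  refine Prod.ext (mul_comm _ _) (Prod.ext (mul_comm _ _) ?_)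
  show p.2.2 * 1 = 1 * p.2.2
  rw [mul_one, one_mul]

lemma e0_comm (p : T4) : p * e0 = e0 * p := by
  refine Prod.ext (mul_comm _ _) (Prod.ext (mul_comm _ _) ?_)
  show p.2.2 * 1 = 1 * p.2.2
  rw [mul_one, one_mul]

/-- The `τ`-component homomorphism. -/
def qt : T4 →* C2 :=
  (MonoidHom.snd C2 C2).comp ((MonoidHom.fst V4 F22).comp (MonoidHom.snd C4 (V4 × F22)))

lemma qt_z1 : qt z1 = 1 := rfl
lemma qt_z2 : qt z2 = 1 := rfl
lemma qt_z3 : qt z3 = Multiplicative.ofAdd 1 := by decide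
lemma qt_e0 : qt e0 = 1 := rfl

lemma H4_le_ker_qt : H4 ≤ qt.ker := by
  rw [H4, Subgroup.closure_le]
  rintro p (rfl | rfl) <;> simp [MonoidHom.mem_ker, qt_z1, qt_z2]

lemma H4_le_G4 : H4 ≤ G4 := by
  rw [H4, Subgroup.closure_le]
  rintro p (rfl | rfl)
  exacts [z1_mem_G4, z2_mem_G4]

/-- The projection to the third coordinate. -/
def p3 : T4 →* F22 := (MonoidHom.snd V4 F22).comp (MonoidHom.snd C4 (V4 × F22))

lemma c2_cases (t : C2) : t = 1 ∨ t = Multiplicative.ofAdd 1 := by revert t; decide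

lemma c4_cases : ∀ c : C4, psi1 c = 1 → c = 1 ∨ c = x4 ^ 2 := by decide

lemma v4_cases : ∀ v : V4, psi2 v = 1 → v = 1 ∨ v = sv * tv := by decide

/-- Every element of `F22` is the third coordinate of an element of `H4`. -/
lemma exists_H4_third (g : F22) : ∃ h ∈ H4, p3 h = g := by
  induction g using Coprod.induction_on with
  | inl m =>
    rcases c2_cases m with rfl | rfl
    · exact ⟨1, one_mem _, by simp [p3]⟩
    · exact ⟨z1, Subgroup.subset_closure (Set.mem_insert _ _), rfl⟩
  | inr m =>
    rcases c2_cases m with rfl | rfl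
    · exact ⟨1, one_mem _, by simp [p3]⟩
    · exact ⟨z2, Subgroup.subset_closure (Set.mem_insert_of_mem _ rfl), rfl⟩
  | mul g g' ih ih' =>
    obtain ⟨h, hh, rfl⟩ := ih
    obtain ⟨h', hh', rfl⟩ := ih'
    exact ⟨h * h', mul_mem hh hh', map_mul _ _ _⟩

/-- Classification of elements of `G4` with trivial third coordinate. -/
lemma G4_third_one (p : T4) (hp : p ∈ G4) (h3 : p.2.2 = 1) :
    p = 1 ∨ p = e0 ∨ p = z3 ∨ p = e0 * z3 := by
  rw [mem_G4_iff, h3, map_one] at hp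
  obtain ⟨h1, h2⟩ := hp
  rw [h2] at h1
  obtain ⟨c, v, w⟩ := p
  simp only at h1 h2 h3
  subst h3
  have hc := c4_cases c h1
  have hv := v4_cases v h2
  rcases hc with rfl | rfl <;> rcases hv with rfl | rfl
  · exact Or.inl rfl
  · refine Or.inr (Or.inr (Or.inr ?_))
    refine Prod.ext (by decide) (Prod.ext (by decide) (one_mul 1).symm)
  · exact Or.inr (Or.inl (Prod.ext rfl (Prod.ext rfl rfl)))
  · exact Or.inr (Or.inr (Or.inl (Prod.ext rfl (Prod.ext rfl rfl))))

lemma closure_z123_eq_G4 : Subgroup.closure {z1, z2, z3} = G4 := by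
  apply le_antisymm
  · rw [Subgroup.closure_le]
    rintro p (rfl | rfl | rfl)
    exacts [z1_mem_G4, z2_mem_G4, z3_mem_G4]
  · intro p hp
    obtain ⟨h, hh, hph⟩ := exists_H4_third (p3 p)
    have hmem : ∀ g ∈ H4, g ∈ Subgroup.closure {z1, z2, z3} := by
      intro g hg
      refine Subgroup.closure_mono ?_ hg
      intro q hq
      rcases hq with rfl | rfl
      · exact Set.mem_insert _ _
      · exact Set.mem_insert_of_mem _ (Set.mem_insert _ _)
    have hz1c : z1 ∈ Subgroup.closure {z1, z2, z3} :=
      Subgroup.subset_closure (Set.mem_insert _ _)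
    have hz3c : z3 ∈ Subgroup.closure {z1, z2, z3} :=
      Subgroup.subset_closure (by right; right; rfl)
    have he0c : e0 ∈ Subgroup.closure {z1, z2, z3} := by
      rw [← z1_sq]; exact pow_mem hz1c 2
    have hq : p * h⁻¹ ∈ G4 := mul_mem hp (inv_mem (H4_le_G4 hh))
    have hq3 : (p * h⁻¹).2.2 = 1 := by
      have : (p * h⁻¹).2.2 = p3 p * (p3 h)⁻¹ := by simp [p3]
      rw [this, hph, mul_inv_cancel]
    have key : p * h⁻¹ ∈ Subgroup.closure {z1, z2, z3} := by
      rcases G4_third_one _ hq hq3 with h' | h' | h' | h' <;> rw [h']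
      · exact one_mem _
      · exact he0c
      · exact hz3c
      · exact mul_mem he0c hz3c
    have := mul_mem key (hmem h hh)
    rwa [inv_mul_cancel_right] at this

open Pointwise

lemma orderOf_z3 : orderOf z3 = 2 :=
  orderOf_eq_prime z3_sq z3_ne_one

lemma zpow_z3 (k : ℤ) : z3 ^ k = 1 ∨ z3 ^ k = z3 := by
  rcases Int.even_or_odd k with ⟨m, hm⟩ | ⟨m, hm⟩
  · left
    rw [hm, ← two_mul, zpow_mul, show ((2:ℤ)) = ((2:ℕ):ℤ) from rfl, zpow_natCast, z3_sq,
      one_zpow]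
  · right
    rw [hm, zpow_add, zpow_mul, show ((2:ℤ)) = ((2:ℕ):ℤ) from rfl, zpow_natCast, z3_sq,
      one_zpow, one_mul, zpow_one]

lemma z3_notMem_H4 : z3 ∉ H4 := by
  intro h
  have := H4_le_ker_qt h
  rw [MonoidHom.mem_ker, qt_z3] at this
  exact absurd this (by decide)

lemma inf_eq_bot : H4 ⊓ Subgroup.zpowers z3 = ⊥ := by
  rw [eq_bot_iff]
  rintro g ⟨hH, hz⟩
  obtain ⟨k, hk⟩ := hz
  have hk' : z3 ^ k = g := hk
  rcases zpow_z3 k with h | h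
  · rw [← hk', h]; exact Subgroup.mem_bot.mpr rfl
  · rw [← hk', h] at hH; exact absurd hH z3_notMem_H4

lemma sup_eq_G4 : H4 ⊔ Subgroup.zpowers z3 = G4 := by
  apply le_antisymm
  · exact sup_le H4_le_G4 ((Subgroup.zpowers_le).mpr z3_mem_G4)
  · rw [← closure_z123_eq_G4, Subgroup.closure_le]
    rintro p (rfl | rfl | rfl)
    · exact Subgroup.mem_sup_left (Subgroup.subset_closure (Set.mem_insert _ _))
    · exact Subgroup.mem_sup_left (Subgroup.subset_closure (Set.mem_insert_of_mem _ rfl))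
    · exact Subgroup.mem_sup_right (Subgroup.mem_zpowers _)

/-- The correction function `C2 → T4`. -/
def cf (t : C2) : T4 := if t = 1 then 1 else z3

lemma cf_one : cf 1 = 1 := if_pos rfl
lemma cf_y : cf (Multiplicative.ofAdd 1) = z3 := if_neg (by decide)

lemma cf_mul (s t : C2) : cf (s * t) = cf s * cf t := by
  rcases c2_cases s with rfl | rfl <;> rcases c2_cases t with rfl | rfl <;>
    simp only [cf_one, cf_y, one_mul, mul_one]
  have : (Multiplicative.ofAdd 1 : C2) * Multiplicative.ofAdd 1 = 1 := by decide
  rw [this, cf_one, ← pow_two, z3_sq]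

lemma cf_comm (t : C2) (p : T4) : p * cf t = cf t * p := by
  rcases c2_cases t with rfl | rfl
  · rw [cf_one, mul_one, one_mul]
  · rw [cf_y]; exact z3_comm p

lemma cf_sq (t : C2) : cf t * cf t = 1 := by
  rcases c2_cases t with rfl | rfl
  · rw [cf_one, mul_one]
  · rw [cf_y, ← pow_two, z3_sq]

lemma qt_cf (t : C2) : qt (cf t) = t := by
  rcases c2_cases t with rfl | rfl
  · rw [cf_one, map_one]
  · rw [cf_y, qt_z3]

lemma cf_mem_G4 (t : C2) : cf t ∈ G4 := by
  rcases c2_cases t with rfl | rfl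
  · rw [cf_one]; exact one_mem _
  · rw [cf_y]; exact z3_mem_G4

/-- Elements of `G4` killed by `qt` lie in `H4`. -/
lemma mem_H4_of_qt_eq_one (p : T4) (hp : p ∈ G4) (hq : qt p = 1) : p ∈ H4 := by
  have hp' : p ∈ H4 ⊔ Subgroup.zpowers z3 := sup_eq_G4 ▸ hp
  have hnorm : Subgroup.Normal (Subgroup.zpowers z3) := by
    constructor
    intro n hn g
    obtain ⟨k, hk⟩ := hn
    have hk' : z3 ^ k = n := hk
    subst hk'
    have heq : g * z3 ^ k * g⁻¹ = z3 ^ k := by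
      rcases zpow_z3 k with h | h <;> rw [h]
      · rw [mul_one, mul_inv_cancel]
      · rw [z3_comm g, mul_assoc, mul_inv_cancel, mul_one]
    rw [heq]
    exact ⟨k, rfl⟩
  have hp'' : p ∈ (H4 : Set T4) * (Subgroup.zpowers z3 : Set T4) := by
    rw [← Subgroup.mul_normal]
    exact hp'
  obtain ⟨h, hh, w, hw, hpw⟩ := hp''
  subst hpw
  obtain ⟨k, hk⟩ := hw
  have hk' : z3 ^ k = w := hk
  subst hk'
  have hq' : qt (h * z3 ^ k) = 1 := hq
  show h * z3 ^ k ∈ H4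
  rcases zpow_z3 k with h' | h' <;> rw [h'] at hq' ⊢
  · rwa [mul_one]
  · exfalso
    rw [map_mul, qt_z3, MonoidHom.mem_ker.mp (H4_le_ker_qt hh), one_mul] at hq'
    exact absurd hq' (by decide)

/-- The homomorphism `G4 → H4`. -/
def rho1 : G4 →* H4 :=
  MonoidHom.mk' (fun g => ⟨(g : T4) * cf (qt g), by
    refine mem_H4_of_qt_eq_one _ (mul_mem g.2 (cf_mem_G4 _)) ?_
    rw [map_mul, qt_cf, ← pow_two]
    rcases c2_cases (qt (g : T4)) with h | h <;> rw [h] <;> decide⟩)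
  (by
    intro g h
    refine Subtype.ext ?_
    show ((g : T4) * h) * cf (qt ((g : T4) * h)) =
      ((g : T4) * cf (qt (g : T4))) * ((h : T4) * cf (qt (h : T4)))
    rw [map_mul, cf_mul]
    exact Commute.mul_mul_mul_comm
      (show Commute (↑h : T4) (cf (qt (↑g : T4))) from cf_comm _ _) _ _)

lemma rho1_apply (g : G4) : (rho1 g : T4) = (g : T4) * cf (qt (g : T4)) := rfl

/-- The homomorphism `G4 → C2`. -/
def rho2 : G4 →* C2 := qt.comp G4.subtype

lemma rho_bijective : Function.Bijective ((rho1.prod rho2) : G4 →* H4 × C2) := by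
  constructor
  · rw [injective_iff_map_eq_one]
    intro g hg
    have h1 : rho1 g = 1 := congrArg Prod.fst hg
    have h2 : qt (g : T4) = 1 := congrArg Prod.snd hg
    have h3 : (g : T4) * cf (qt (g : T4)) = 1 := congrArg Subtype.val h1
    rw [h2, cf_one, mul_one] at h3
    exact Subtype.ext h3
  · rintro ⟨h, t⟩
    refine ⟨⟨(h : T4) * cf t, mul_mem (H4_le_G4 h.2) (cf_mem_G4 t)⟩, ?_⟩
    have hq : qt ((h : T4) * cf t) = t := by
      rw [map_mul, qt_cf, MonoidHom.mem_ker.mp (H4_le_ker_qt h.2), one_mul]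
    refine Prod.ext ?_ hq
    refine Subtype.ext ?_
    show ((h : T4) * cf t) * cf (qt ((h : T4) * cf t)) = (h : T4)
    rw [hq, mul_assoc, cf_sq, mul_one]

lemma G4_iso : Nonempty (G4 ≃* H4 × C2) :=
  ⟨MulEquiv.ofBijective _ rho_bijective⟩

/-- `β₄ : H₄ → C₂ ∗ C₂`, the restriction of the third projection. -/
def beta4 : H4 →* F22 := p3.comp H4.subtype

lemma beta4_surjective : Function.Surjective beta4 := by
  intro g
  obtain ⟨h, hh, hph⟩ := exists_H4_third g
  exact ⟨⟨h, hh⟩, hph⟩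

lemma beta4_ker (w : H4) : beta4 w = 1 ↔ ((w : T4) = 1 ∨ (w : T4) = e0) := by
  constructor
  · intro hw
    have hg : (w : T4) ∈ G4 := H4_le_G4 w.2
    have hqw : qt (w : T4) = 1 := MonoidHom.mem_ker.mp (H4_le_ker_qt w.2)
    rcases G4_third_one (w : T4) hg hw with h | h | h | h
    · exact Or.inl h
    · exact Or.inr h
    · exfalso; rw [h, qt_z3] at hqw; exact absurd hqw (by decide)
    · exfalso
      rw [h, map_mul, qt_z3, qt_e0, one_mul] at hqw
      exact absurd hqw (by decide)
  · rintro (h | h) <;> rw [beta4] <;>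
      simp only [MonoidHom.comp_apply, Subgroup.coe_subtype] <;> rw [h] <;> rfl

/-- For the fiber product `G₄` of `ψ₁ : C₄ → C₂`,
`ψ₂ : C₂×C₂ → C₂`, `ψ₃ : C₂∗C₂ → C₂`:
(i) `G₄ = ⟨z₁, z₂, z₃⟩`;
(ii) `z₃ ∈ G₄` is central of order 2 and `G₄` is the internal direct product of
`H₄ = ⟨z₁,z₂⟩` and `⟨z₃⟩`, so `G₄ ≅ H₄ × C₂`;
(iii) there is a well-defined surjective homomorphism `β₄ : H₄ → C₂∗C₂` with
`β₄ z₁ = a`, `β₄ z₂ = b`, whose kernel is `{1, (x²,1,1)}`, central of order 2 in `H₄`,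
and `z₁² = z₂² = (x²,1,1)`. -/
theorem stmt18 :
    (∀ p : T4, p ∈ G4 ↔ (psi1 p.1 = psi2 p.2.1 ∧ psi2 p.2.1 = psi3 p.2.2)) ∧
    Subgroup.closure {z1, z2, z3} = G4 ∧
    (z3 ∈ G4 ∧ orderOf z3 = 2 ∧ (∀ p ∈ G4, p * z3 = z3 * p) ∧
      H4 ⊓ Subgroup.zpowers z3 = ⊥ ∧ H4 ⊔ Subgroup.zpowers z3 = G4 ∧
      Nonempty (G4 ≃* H4 × C2)) ∧
    (∃ β₄ : H4 →* F22, Function.Surjective β₄ ∧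
      (∀ w : H4, (w : T4) = z1 → β₄ w = fa) ∧
      (∀ w : H4, (w : T4) = z2 → β₄ w = fb) ∧
      (∀ w : H4, β₄ w = 1 ↔ ((w : T4) = 1 ∨ (w : T4) = e0)) ∧
      (∀ w : H4, β₄ w = 1 → ∀ v : H4, w * v = v * w) ∧
      e0 ≠ 1 ∧ z1 ^ 2 = e0 ∧ z2 ^ 2 = e0) := by
  refine ⟨mem_G4_iff, closure_z123_eq_G4,
    ⟨z3_mem_G4, orderOf_z3, fun p _ => z3_comm p, inf_eq_bot, sup_eq_G4, G4_iso⟩,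
    ⟨beta4, beta4_surjective, ?_, ?_, beta4_ker, ?_, e0_ne_one, z1_sq, z2_sq⟩⟩
  · intro w hw
    show p3 (w : T4) = fa
    rw [hw]; rfl
  · intro w hw
    show p3 (w : T4) = fb
    rw [hw]; rfl
  · intro w hw v
    rcases (beta4_ker w).mp hw with h | h <;> refine Subtype.ext ?_
    · show (w : T4) * (v : T4) = (v : T4) * (w : T4)
      rw [h, one_mul, mul_one]
    · show (w : T4) * (v : T4) = (v : T4) * (w : T4)
      rw [h]
      exact (e0_comm _).symm
end
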